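/- arXiv:1812.01218 — 5 statements merged into one kernel-verified Lean document; each statement's English description precedes it below -/
import Mathlib

section
/- If n ≥ 2 and M is an n-connected matroid with at least 2(n-1) elements, then every circuit of M has at least n elements. -/
open Set

variable {α : Type*}

/-- The rank of a set `X` in a matroid `M`: the maximum size of an independent subset of `X`. -/
noncomputable def mrank (M : Matroid α) (X : Set α) : ℕ :=
  sSup {n | ∃ I, M.Indep I ∧ I ⊆ X ∧ I.ncard = n}

/-- `(A, B)` is a `k`-separation of `M`: a partition of the ground set with both sides of
size at least `k` and `r(A) + r(B) - r(M) ≤ k - 1` (written additively). -/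
def IsKSeparation (M : Matroid α) (k : ℕ) (A B : Set α) : Prop :=
  A ∪ B = M.E ∧ Disjoint A B ∧ k ≤ A.ncard ∧ k ≤ B.ncard ∧
    mrank M A + mrank M B + 1 ≤ mrank M M.E + k

/-- `M` is `n`-connected if it has no `k`-separation for any `k < n`. -/
def NConnected (M : Matroid α) (n : ℕ) : Prop :=
  ∀ k A B, 1 ≤ k → k < n → ¬ IsKSeparation M k A B

/-- A circuit is a minimal dependent set. -/
def MCircuit (M : Matroid α) (C : Set α) : Prop := Minimal M.Dep C

/-- A cocircuit is a circuit of the dual matroid. -/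
def MCocircuit (M : Matroid α) (C : Set α) : Prop := MCircuit M✶ C

/-- A loop is a dependent singleton. -/
def MLoop (M : Matroid α) (e : α) : Prop := M.Dep {e}

/-- A coloop is a loop of the dual, i.e. an element lying in every base. -/
def MColoop (M : Matroid α) (e : α) : Prop := M✶.Dep {e}

/-- `M` is the vector matroid of the family of vectors `φ` over `GF(2)`:
a set is independent iff it lies in the ground set and the corresponding
vectors are linearly independent. -/
def IsRep {W : Type*} [AddCommGroup W] [Module (ZMod 2) W] (M : Matroid α) (φ : α → W) : Prop :=
  ∀ I : Set α, M.Indep I ↔ I ⊆ M.E ∧ LinearIndependent (ZMod 2) (I.restrict φ)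

open scoped Classical in
/-- The columns of the element splitting matrix `A'_T`: each original column gets an extra
coordinate (the new row), equal to `1` exactly on the columns labelled by `T`, and a new
column `a` which is `1` in the new row and `0` elsewhere. -/
noncomputable def splitRep {W : Type*} [AddCommGroup W] [Module (ZMod 2) W]
    (φ : α → W) (T : Set α) (a : α) : α → W × ZMod 2 :=
  fun x => if x = a then (0, 1) else (φ x, if x ∈ T then 1 else 0)

/-- `N` is the element splitting matroid `M'_T` of the binary matroid `M` (represented by `φ`)
with respect to `T`, with new element `a`. -/
def IsEleSplit {W : Type*} [AddCommGroup W] [Module (ZMod 2) W]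
    (M : Matroid α) (φ : α → W) (T : Set α) (a : α) (N : Matroid α) : Prop :=
  a ∉ M.E ∧ N.E = insert a M.E ∧ IsRep N (splitRep φ T a)

/-- `M` is the contraction `N / a` of the single element `a` from `N`. -/
def ContractElemEq (N : Matroid α) (a : α) (M : Matroid α) : Prop :=
  M.E = N.E \ {a} ∧ ∀ I : Set α,
    M.Indep I ↔ a ∉ I ∧
      ((N.Indep {a} ∧ N.Indep (insert a I)) ∨ (¬ N.Indep {a} ∧ N.Indep I))


lemma mrank_le {M : Matroid α} {X : Set α} {m : ℕ}
    (h : ∀ I, M.Indep I → I ⊆ X → I.ncard ≤ m) : mrank M X ≤ m := by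
  unfold mrank
  refine csSup_le ⟨0, ∅, M.empty_indep, empty_subset _, by simp⟩ ?_
  rintro k ⟨I, hI, hIX, rfl⟩
  exact h I hI hIX

lemma le_mrank_ground {M : Matroid α} (hfin : M.E.Finite) {X : Set α} :
    mrank M X ≤ mrank M M.E := by
  unfold mrank
  refine csSup_le ⟨0, ∅, M.empty_indep, empty_subset _, by simp⟩ ?_
  rintro k ⟨I, hI, _, rfl⟩
  refine le_csSup ⟨M.E.ncard, ?_⟩ ⟨I, hI, hI.subset_ground, rfl⟩
  rintro m ⟨J, hJ, hJX, rfl⟩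
  exact Set.ncard_le_ncard hJ.subset_ground hfin

/-- If n ≥ 2 and M is an n-connected matroid with at least 2(n-1) elements,
then every circuit of M has at least n elements. -/
theorem circuit_card_ge_of_nConnected {α : Type*} (M : Matroid α) (n : ℕ)
    (hn : 2 ≤ n) (hfin : M.E.Finite) (hcard : 2 * (n - 1) ≤ M.E.ncard)
    (hconn : NConnected M n) :
    ∀ C : Set α, MCircuit M C → n ≤ C.ncard := by
  intro C hC
  by_contra hlt
  rw [not_le] at hlt
  have hdep : M.Dep C := hC.1
  have hCsub : C ⊆ M.E := hdep.subset_ground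
  have hCfin : C.Finite := hfin.subset hCsub
  set k := C.ncard with hk
  have hCne : C.Nonempty := by
    rcases C.eq_empty_or_nonempty with rfl | h
    · exact absurd M.empty_indep hdep.not_indep
    · exact h
  have hk1 : 1 ≤ k := (Set.ncard_pos hCfin).mpr hCne
  have hkn : k ≤ n - 1 := by omega
  have h2k : 2 * k ≤ M.E.ncard := le_trans (by omega) hcard
  refine hconn k C (M.E \ C) hk1 hlt ⟨?_, ?_, le_refl _, ?_, ?_⟩
  · rw [Set.union_diff_cancel hCsub]
  · exact Set.disjoint_sdiff_right
  · rw [Set.ncard_diff hCsub hCfin]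
    omega
  · have h1 : mrank M C ≤ k - 1 := by
      apply mrank_le
      intro I hI hIC
      have hne : I ≠ C := fun h => hdep.not_indep (h ▸ hI)
      have := Set.ncard_lt_ncard (hIC.ssubset_of_ne hne) hCfin
      omega
    have h2 : mrank M (M.E \ C) ≤ mrank M M.E := le_mrank_ground hfin
    omega
end

section
/- Let M be a binary matroid, T ⊆ E(M), and let C be a circuit of M with |C ∩ T| even. Then C is also a circuit (in particular, a dependent set) of the element splitting matroid M'_T. -/
open Set

variable {α : Type*}

/-!
Over `GF(2)` every nonzero coefficient is `1`, so a circuit `C` of `M` is exactly the support of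
a linear dependency `∑_{x ∈ C} φ x = 0`. In `A'_T` the columns of `C` gain the new coordinate
`[x ∈ T]`, whose sum is `|C ∩ T| mod 2 = 0`, so `C` stays dependent. Forgetting the new
coordinate shows that independent sets of `M` remain independent in `M'_T`, so every proper
subset of `C` is still independent.
-/

theorem linearDepOn_zmod_two_iff {ι W : Type*} [AddCommGroup W] [Module (ZMod 2) W]
    {v : ι → W} {s : Set ι} :
    ¬ LinearIndepOn (ZMod 2) v s ↔ ∃ t : Finset ι, t.Nonempty ∧ ↑t ⊆ s ∧ ∑ i ∈ t, v i = 0 := by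
  classical
  rw [linearIndepOn_iff']
  push Not
  constructor
  · rintro ⟨t, g, hts, hsum, i, hit, hgi⟩
    have hg : ∀ j ∈ t.filter (g · ≠ 0), g j = 1 := fun j hj =>
      Fin.eq_one_of_ne_zero _ (Finset.mem_filter.mp hj).2
    refine ⟨t.filter (g · ≠ 0), ⟨i, Finset.mem_filter.mpr ⟨hit, hgi⟩⟩,
      fun j hj => hts (Finset.mem_filter.mp hj).1, ?_⟩
    calc ∑ j ∈ t.filter (g · ≠ 0), v j = ∑ j ∈ t.filter (g · ≠ 0), g j • v j :=
          Finset.sum_congr rfl fun j hj => by rw [hg j hj, one_smul]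
      _ = ∑ j ∈ t, g j • v j :=
          Finset.sum_filter_of_ne fun j _ h hj => h (by rw [hj, zero_smul])
      _ = 0 := hsum
  · rintro ⟨t, ⟨i, hi⟩, hts, hsum⟩
    exact ⟨t, 1, hts, by simpa using hsum, i, hi, one_ne_zero⟩

namespace IsRep

variable {W : Type*} [AddCommGroup W] [Module (ZMod 2) W] {M : Matroid α} {φ : α → W}

theorem dep_iff (hM : IsRep M φ) {D : Set α} :
    M.Dep D ↔ D ⊆ M.E ∧ ∃ t : Finset α, t.Nonempty ∧ ↑t ⊆ D ∧ ∑ x ∈ t, φ x = 0 := by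
  rw [Matroid.Dep, hM D, ← linearDepOn_zmod_two_iff]
  exact ⟨fun ⟨h, hE⟩ => ⟨hE, fun hli => h ⟨hE, hli⟩⟩, fun ⟨hE, h⟩ => ⟨fun hI => h hI.2, hE⟩⟩

theorem exists_finset_eq_sum_eq_zero_of_circuit (hM : IsRep M φ) {C : Set α}
    (hC : MCircuit M C) : ∃ t : Finset α, ↑t = C ∧ ∑ x ∈ t, φ x = 0 := by
  obtain ⟨hCE, t, ht, htC, hsum⟩ := hM.dep_iff.mp hC.1
  have htdep : M.Dep t := hM.dep_iff.mpr ⟨htC.trans hCE, t, ht, subset_rfl, hsum⟩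
  exact ⟨t, htC.antisymm (hC.2 htdep htC), hsum⟩

end IsRep

theorem sum_splitRep_of_notMem {W : Type*} [AddCommGroup W] [Module (ZMod 2) W]
    (φ : α → W) (T : Set α) {a : α} {t : Finset α} (ha : a ∉ t) :
    ∑ x ∈ t, splitRep φ T a x = (∑ x ∈ t, φ x, (((t : Set α) ∩ T).ncard : ZMod 2)) := by
  classical
  have hne : ∀ x ∈ t, x ≠ a := fun x hx h => ha (h ▸ hx)
  rw [Finset.sum_congr rfl fun x hx => by rw [splitRep, if_neg (hne x hx)]]
  ext
  · simp [Prod.fst_sum]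
  · rw [Prod.snd_sum, Finset.sum_boole, ← Set.ncard_coe_finset, Finset.coe_filter]
    rfl

theorem IsEleSplit.indep_of_indep {W : Type*} [AddCommGroup W] [Module (ZMod 2) W]
    {M N : Matroid α} {φ : α → W} {T : Set α} {a : α} (hM : IsRep M φ)
    (hN : IsEleSplit M φ T a N) {I : Set α} (hI : M.Indep I) : N.Indep I := by
  obtain ⟨haE, hNE, hNrep⟩ := hN
  obtain ⟨hIE, hli⟩ := (hM I).mp hI
  refine (hNrep I).mpr ⟨hNE ▸ hIE.trans (subset_insert a M.E), ?_⟩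
  refine LinearIndepOn.of_comp (LinearMap.fst (ZMod 2) W (ZMod 2))
    (LinearIndepOn.congr hli fun x hx => ?_)
  simp [splitRep, show x ≠ a from fun h => haE (h ▸ hIE hx)]

theorem circuit_even_inter_is_circuit_eleSplit_general {α W : Type*}
    [AddCommGroup W] [Module (ZMod 2) W]
    (M N : Matroid α) (φ : α → W) (hM : IsRep M φ) (T : Set α)
    (a : α) (hN : IsEleSplit M φ T a N)
    (C : Set α) (hC : MCircuit M C) (heven : Even ((C ∩ T).ncard)) :
    MCircuit N C := by
  obtain ⟨t, rfl, hsum⟩ := hM.exists_finset_eq_sum_eq_zero_of_circuit hC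
  have haC : a ∉ t := fun ha => hN.1 (hC.1.subset_ground ha)
  have hdep : N.Dep t := by
    refine hN.2.2.dep_iff.mpr ⟨hN.2.1 ▸ hC.1.subset_ground.trans (subset_insert a M.E),
      t, hC.1.nonempty, subset_rfl, ?_⟩
    rw [sum_splitRep_of_notMem φ T haC, hsum, ZMod.natCast_eq_zero_iff_even.mpr heven,
      Prod.mk_zero_zero]
  exact ⟨hdep, fun D hD hDC =>
    hC.2 ⟨fun hI => hD.not_indep (hN.indep_of_indep hM hI), hDC.trans hC.1.subset_ground⟩ hDC⟩

/-- A circuit C of M with |C ∩ T| even is also a circuit of the element splitting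
matroid M'_T. -/
theorem circuit_even_inter_is_circuit_eleSplit {α W : Type*}
    [AddCommGroup W] [Module (ZMod 2) W]
    (M N : Matroid α) (φ : α → W) (hM : IsRep M φ) (T : Set α) (hT : T ⊆ M.E)
    (a : α) (hN : IsEleSplit M φ T a N)
    (C : Set α) (hC : MCircuit M C) (heven : Even ((C ∩ T).ncard)) :
    MCircuit N C :=
  circuit_even_inter_is_circuit_eleSplit_general M N φ hM T a hN C hC heven
end

section
/- Let M be a binary matroid with rank function r, let T ⊆ E(M), and let r' be the rank function of the element splitting matroid M'_T. If A ⊆ E(M) ∪ {a} with a ∈ A, then r'(A) = r(A \ {a}) + 1. -/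
open Set

variable {α : Type*}

/-! The new column `a = (0, 1)` spans exactly the kernel of the projection forgetting the new row,
and on `E(M)` that projection recovers the columns of `M`. Hence `I ∪ {a}` is independent in `M'_T`
iff `I` is independent in `M`, that is, `M'_T / a = M` with `a` a nonloop; and contracting a nonloop
lowers the rank of every set containing it by exactly one. -/

theorem linearIndepOn_insert_iff_comp_of_ker_eq_span {K ι V V' : Type*} [DivisionRing K]
    [AddCommGroup V] [Module K V] [AddCommGroup V'] [Module K V'] {f : ι → V} {s : Set ι} {a : ι}
    (g : V →ₗ[K] V') (has : a ∉ s) (hfa : f a ≠ 0) (hker : LinearMap.ker g = K ∙ f a) :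
    LinearIndepOn K f (insert a s) ↔ LinearIndepOn K (g ∘ f) s := by
  rw [linearIndepOn_insert has, ← Submodule.disjoint_span_singleton' hfa, ← hker, image_eq_range]
  exact ⟨fun ⟨hs, hdisj⟩ ↦ hs.map hdisj, fun h ↦ ⟨h.of_comp g, Submodule.range_ker_disjoint h⟩⟩

theorem ker_fst_eq_span_zero_one (K V : Type*) [DivisionRing K] [AddCommGroup V] [Module K V] :
    LinearMap.ker (LinearMap.fst K V K) = K ∙ ((0, 1) : V × K) := by
  ext x
  simp only [LinearMap.mem_ker, LinearMap.fst_apply, Submodule.mem_span_singleton]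
  refine ⟨fun h ↦ ⟨x.2, Prod.ext (by simp [h]) (by simp)⟩, ?_⟩
  rintro ⟨c, rfl⟩
  simp

theorem linearIndepOn_splitRep_insert_iff {W : Type*} [AddCommGroup W] [Module (ZMod 2) W]
    (φ : α → W) (T : Set α) {a : α} {I : Set α} (haI : a ∉ I) :
    LinearIndepOn (ZMod 2) (splitRep φ T a) (insert a I) ↔ LinearIndepOn (ZMod 2) φ I := by
  rw [linearIndepOn_insert_iff_comp_of_ker_eq_span (LinearMap.fst _ W _) haI (by simp [splitRep])
    (by simpa [splitRep] using ker_fst_eq_span_zero_one (ZMod 2) W)]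
  refine linearIndepOn_congr fun x hx ↦ ?_
  simp [splitRep, show x ≠ a from fun h ↦ haI (h ▸ hx)]

namespace IsEleSplit

open Matroid

variable {W : Type*} [AddCommGroup W] [Module (ZMod 2) W] {M N : Matroid α} {φ : α → W}
  {T : Set α} {a : α}

theorem indep_insert_iff (hM : IsRep M φ) (hN : IsEleSplit M φ T a N) {I : Set α}
    (hI : I ⊆ M.E) : N.Indep (insert a I) ↔ M.Indep I := by
  obtain ⟨haE, hNE, hNrep⟩ := hN
  rw [hNrep, hM, hNE, insert_subset_insert_iff (fun h ↦ haE (hI h)), and_iff_right hI,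
    and_iff_right hI]
  exact linearIndepOn_splitRep_insert_iff φ T fun h ↦ haE (hI h)

theorem isNonloop (hM : IsRep M φ) (hN : IsEleSplit M φ T a N) : N.IsNonloop a := by
  simpa [indep_singleton] using (hN.indep_insert_iff hM (empty_subset _)).2 M.empty_indep

theorem contract_eq (hM : IsRep M φ) (hN : IsEleSplit M φ T a N) : N ／ {a} = M := by
  have hE : (N ／ {a}).E = M.E := by
    rw [contract_ground, hN.2.1, insert_sdiff_self_of_notMem hN.1]
  refine ext_indep hE fun I hI ↦ ?_
  rw [hE] at hI
  rw [(hN.isNonloop hM).contractElem_indep_iff, hN.indep_insert_iff hM hI,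
    and_iff_right fun haI ↦ hN.1 (hI haI)]

end IsEleSplit

open Matroid in
theorem Matroid.IsNonloop.eRk_contractElem_add_one {M : Matroid α} {e : α} {X : Set α}
    (he : M.IsNonloop e) (heX : e ∈ X) : (M ／ {e}).eRk (X \ {e}) + 1 = M.eRk X := by
  obtain ⟨I, hI, heI⟩ := he.indep.subset_isBasis'_of_subset (singleton_subset_iff.2 heX)
  rw [(hI.contract_isBasis'_sdiff_sdiff_of_subset heI).eRk_eq_encard, hI.eRk_eq_encard,
    encard_sdiff_singleton_add_one (heI rfl)]

theorem mrank_eq_toNat_eRk (M : Matroid α) (X : Set α) : mrank M X = (M.eRk X).toNat := by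
  unfold mrank
  by_cases hX : M.IsRkFinite X
  · obtain ⟨I, hI, -⟩ := hX.exists_finite_isBasis'
    refine IsGreatest.csSup_eq ⟨⟨I, hI.indep, hI.subset, by rw [hI.eRk_eq_encard, ncard_def]⟩, ?_⟩
    rintro _ ⟨J, hJ, hJX, rfl⟩
    exact ENat.toNat_le_toNat (hJ.encard_le_eRk_of_subset hJX) hX.eRk_lt_top.ne
  -- Both sides are junk values: `sSup` of an unbounded set in `ℕ` and `ENat.toNat ⊤` are `0`.
  rw [← Matroid.eRk_eq_top_iff] at hX
  rw [hX, ENat.toNat_top]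
  refine Nat.sSup_of_not_bddAbove fun ⟨n, hn⟩ ↦ ?_
  obtain ⟨J, hJX, hJ, hJn⟩ := M.le_eRk_iff.1 (hX ▸ le_top : ((n + 1 : ℕ) : ℕ∞) ≤ M.eRk X)
  have hJle : J.ncard ≤ n := hn ⟨J, hJ, hJX, rfl⟩
  rw [ncard_def, hJn, ENat.toNat_natCast] at hJle
  omega

theorem eleSplit_rank_of_mem_general {α W : Type*} [AddCommGroup W] [Module (ZMod 2) W]
    (M N : Matroid α) (φ : α → W) (hM : IsRep M φ) (T : Set α)
    (hfin : M.E.Finite) (a : α) (hN : IsEleSplit M φ T a N)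
    (A : Set α) (haA : a ∈ A) :
    mrank N A = mrank M (A \ {a}) + 1 := by
  have : M.Finite := ⟨hfin⟩
  rw [mrank_eq_toNat_eRk, mrank_eq_toNat_eRk, ← (hN.isNonloop hM).eRk_contractElem_add_one haA,
    hN.contract_eq hM, ENat.toNat_add ((M.isRkFinite_set _).eRk_lt_top.ne) ENat.one_ne_top,
    ENat.toNat_one]

/-- If a ∈ A ⊆ E(M) ∪ {a}, then the rank of A in M'_T equals the rank of A \ {a} in M,
plus one. -/
theorem eleSplit_rank_of_mem {α W : Type*} [AddCommGroup W] [Module (ZMod 2) W]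
    (M N : Matroid α) (φ : α → W) (hM : IsRep M φ) (T : Set α) (hT : T ⊆ M.E)
    (hfin : M.E.Finite) (a : α) (hN : IsEleSplit M φ T a N)
    (A : Set α) (hA : A ⊆ insert a M.E) (haA : a ∈ A) :
    mrank N A = mrank M (A \ {a}) + 1 :=
  eleSplit_rank_of_mem_general M N φ hM T hfin a hN A haA
end

section
/- Let M be a binary matroid and T ⊆ E(M). Then T ∪ {a} contains a cocircuit of the element splitting matroid M'_T, where a is the new element; in fact if T contains no cocircuit of M restricted appropriately, T ∪ {a} itself is a cocircuit of M'_T. -/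
open Set

variable {α : Type*}

/-! The new coordinate of `splitRep φ T a` vanishes on `E(M) \ T`, so the column of `a` is not
spanned by the complement of `T ∪ {a}`, which is therefore codependent in `M'_T`. If `T` is
coindependent in `M`, the columns of `E(M) \ T` span those of `M`; adding back a single element
of `T ∪ {a}` recovers the column of `a` as well, and with it every column of `M'_T`, so every
`(T ∪ {a}) \ {x}` is coindependent. -/

open Matroid

namespace IsRep

variable {W : Type*} [AddCommGroup W] [Module (ZMod 2) W] {M : Matroid α} {φ : α → W}
  {I S : Set α} {e : α}

lemma mem_closure_iff_of_indep (hM : IsRep M φ) (hI : M.Indep I) (he : e ∈ M.E) :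
    e ∈ M.closure I ↔ φ e ∈ Submodule.span (ZMod 2) (φ '' I) := by
  by_cases heI : e ∈ I
  · exact iff_of_true (M.subset_closure I hI.subset_ground heI)
      (Submodule.subset_span (mem_image_of_mem φ heI))
  have hIli : LinearIndepOn (ZMod 2) φ I := ((hM I).1 hI).2
  rw [hI.mem_closure_iff_of_notMem heI, ← M.not_indep_iff (insert_subset he hI.subset_ground),
    hM, and_iff_right (insert_subset he hI.subset_ground)]
  change ¬ LinearIndepOn (ZMod 2) φ (insert e I) ↔ _
  rw [linearIndepOn_insert heI, and_iff_right hIli, not_not]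

lemma mem_closure_iff (hM : IsRep M φ) (hS : S ⊆ M.E) (he : e ∈ M.E) :
    e ∈ M.closure S ↔ φ e ∈ Submodule.span (ZMod 2) (φ '' S) := by
  obtain ⟨I, hI⟩ := M.exists_isBasis S hS
  have hspan : Submodule.span (ZMod 2) (φ '' S) = Submodule.span (ZMod 2) (φ '' I) := by
    refine le_antisymm ?_ (Submodule.span_mono (image_mono hI.subset))
    rw [Submodule.span_le]
    rintro _ ⟨s, hs, rfl⟩
    exact (hM.mem_closure_iff_of_indep hI.indep (hS hs)).1 (hI.subset_closure hs)
  rw [← hI.closure_eq_closure, hspan, hM.mem_closure_iff_of_indep hI.indep he]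

lemma spanning_iff (hM : IsRep M φ) (hS : S ⊆ M.E) :
    M.Spanning S ↔ ∀ e ∈ M.E, φ e ∈ Submodule.span (ZMod 2) (φ '' S) := by
  rw [M.spanning_iff_ground_subset_closure hS]
  exact forall₂_congr fun e he => hM.mem_closure_iff hS he

end IsRep

section splitRep

variable {W : Type*} [AddCommGroup W] [Module (ZMod 2) W] {φ : α → W} {T S : Set α} {a x : α}

lemma splitRep_self : splitRep φ T a a = (0, 1) := by
  simp [splitRep]

lemma splitRep_of_mem (hxa : x ≠ a) (hxT : x ∈ T) : splitRep φ T a x = (φ x, 1) := by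
  simp [splitRep, hxa, hxT]

lemma splitRep_of_notMem (hxa : x ≠ a) (hxT : x ∉ T) : splitRep φ T a x = (φ x, 0) := by
  simp [splitRep, hxa, hxT]

lemma span_splitRep_image_of_disjoint (haS : a ∉ S) (hST : Disjoint S T) :
    Submodule.span (ZMod 2) (splitRep φ T a '' S) =
      (Submodule.span (ZMod 2) (φ '' S)).map (LinearMap.inl (ZMod 2) W (ZMod 2)) := by
  rw [Submodule.map_span, image_image]
  congr 1
  refine image_congr fun x hx => ?_
  exact splitRep_of_notMem (ne_of_mem_of_not_mem hx haS) (hST.notMem_of_mem_left hx)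

end splitRep

namespace IsEleSplit

variable {W : Type*} [AddCommGroup W] [Module (ZMod 2) W] {M N : Matroid α} {φ : α → W}
  {T : Set α} {a : α}

lemma ground_sdiff_insert (hN : IsEleSplit M φ T a N) : N.E \ insert a T = M.E \ T := by
  rw [hN.2.1, insert_sdiff_of_mem _ (mem_insert a T), sdiff_insert_of_notMem hN.1]

lemma dual_dep_insert (hN : IsEleSplit M φ T a N) (hT : T ⊆ M.E) : N✶.Dep (insert a T) := by
  have haT : insert a T ⊆ N.E := hN.2.1 ▸ insert_subset_insert hT
  rw [dep_iff, dual_ground, and_iff_left haT, ← coindep_def, coindep_iff_compl_spanning haT,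
    hN.ground_sdiff_insert]
  obtain ⟨ha, hNE, hrep⟩ := hN
  rw [hrep.spanning_iff (hNE ▸ sdiff_subset.trans (subset_insert a M.E))]
  intro hspan
  have h01 := hspan a (hNE ▸ mem_insert a M.E)
  rw [splitRep_self, span_splitRep_image_of_disjoint (fun h => ha h.1) disjoint_sdiff_left] at h01
  obtain ⟨w, -, hw⟩ := h01
  simpa using congrArg Prod.snd hw

lemma spanning_insert_compl (hN : IsEleSplit M φ T a N) (hM : IsRep M φ) (hT : T ⊆ M.E)
    (hTco : M.Coindep T) {x : α} (hx : x ∈ insert a T) : N.Spanning (insert x (M.E \ T)) := by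
  obtain ⟨ha, hNE, hrep⟩ := hN
  have hxN : insert x (M.E \ T) ⊆ N.E :=
    hNE ▸ insert_subset (insert_subset_insert hT hx) (sdiff_subset.trans (subset_insert a M.E))
  rw [hrep.spanning_iff hxN]
  set P := Submodule.span (ZMod 2) (splitRep φ T a '' insert x (M.E \ T))
  have hxP : splitRep φ T a x ∈ P := Submodule.subset_span (mem_image_of_mem _ (mem_insert x _))
  have hφP : ∀ e ∈ M.E, (φ e, (0 : ZMod 2)) ∈ P := by
    intro e he
    have hspan : Submodule.span (ZMod 2) (splitRep φ T a '' (M.E \ T)) ≤ P :=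
      Submodule.span_mono (image_mono (subset_insert x _))
    rw [span_splitRep_image_of_disjoint (fun h => ha h.1) disjoint_sdiff_left] at hspan
    exact hspan ⟨φ e, (hM.spanning_iff sdiff_subset).1 hTco.compl_spanning e he, rfl⟩
  have h01 : ((0 : W), (1 : ZMod 2)) ∈ P := by
    rcases hx with rfl | hxT
    · rwa [splitRep_self] at hxP
    · rw [splitRep_of_mem (ne_of_mem_of_not_mem (hT hxT) ha) hxT] at hxP
      simpa using P.sub_mem hxP (hφP x (hT hxT))
  intro e he
  rw [hNE] at he
  obtain rfl | heM := he
  · rwa [splitRep_self]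
  by_cases heT : e ∈ T
  · rw [splitRep_of_mem (ne_of_mem_of_not_mem heM ha) heT]
    simpa using P.add_mem (hφP e heM) h01
  · rw [splitRep_of_notMem (ne_of_mem_of_not_mem heM ha) heT]
    exact hφP e heM

lemma isCocircuit_insert (hN : IsEleSplit M φ T a N) (hM : IsRep M φ) (hT : T ⊆ M.E)
    (hTco : M.Coindep T) : N.IsCocircuit (insert a T) := by
  have haT : insert a T ⊆ N.E := hN.2.1 ▸ insert_subset_insert hT
  rw [isCocircuit_def, isCircuit_iff_dep_forall_sdiff_singleton_indep]
  refine ⟨hN.dual_dep_insert hT, fun x hx => ?_⟩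
  rw [← coindep_def, coindep_iff_compl_spanning (sdiff_subset.trans haT), sdiff_sdiff_right,
    inter_eq_right.2 (singleton_subset_iff.2 (haT hx)), union_singleton, hN.ground_sdiff_insert]
  exact hN.spanning_insert_compl hM hT hTco hx

end IsEleSplit

theorem eleSplit_cocircuit_in_insert_general {α W : Type*} [AddCommGroup W] [Module (ZMod 2) W]
    (M N : Matroid α) (φ : α → W) (hM : IsRep M φ) (T : Set α) (hT : T ⊆ M.E)
    (a : α) (hN : IsEleSplit M φ T a N) :
    (∃ Q ⊆ insert a T, MCocircuit N Q) ∧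
      ((¬ ∃ Q ⊆ T, MCocircuit M Q) → MCocircuit N (insert a T)) := by
  refine ⟨?_, fun hnone => ?_⟩
  · obtain ⟨Q, hQT, hQ⟩ := (hN.dual_dep_insert hT).exists_isCircuit_subset
    exact ⟨Q, hQT, hQ⟩
  · have hTco : M.Coindep T :=
      coindep_iff_forall_subset_not_isCocircuit.2 ⟨fun Q hQT hQ => hnone ⟨Q, hQT, hQ⟩, hT⟩
    exact hN.isCocircuit_insert hM hT hTco

/-- T ∪ {a} contains a cocircuit of the element splitting matroid M'_T; moreover if T
contains no cocircuit of M, then T ∪ {a} itself is a cocircuit of M'_T. -/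
theorem eleSplit_cocircuit_in_insert {α W : Type*} [AddCommGroup W] [Module (ZMod 2) W]
    (M N : Matroid α) (φ : α → W) (hM : IsRep M φ) (T : Set α) (hT : T ⊆ M.E)
    (hTne : T.Nonempty) (a : α) (hN : IsEleSplit M φ T a N) :
    (∃ Q ⊆ insert a T, MCocircuit N Q) ∧
      ((¬ ∃ Q ⊆ T, MCocircuit M Q) → MCocircuit N (insert a T)) :=
  eleSplit_cocircuit_in_insert_general M N φ hM T hT a hN
end

section
/- Let n ≥ 2, let M be an n-connected binary matroid with |E(M)| ≥ 2n-2, and let T ⊆ E(M) with |T| = n-1. If the element splitting matroid M'_T is n-connected, then every cocircuit Q of M with Q ∩ T ≠ ∅ satisfies |Q| ≥ 2|Q ∩ T|. -/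
open Set

variable {α : Type*}

/-!
Over `GF(2)` a cocircuit `Q` of `M` is exactly the support, on `E(M)`, of a linear functional
`g` applied to the columns of `A`. The functional `g + (new coordinate)` on the columns of `A'_T`
has support `(Q ∆ T) ∪ {a}`, so the complement of this set does not span `M'_T`. If
`|Q| < 2|Q ∩ T|`, then `k = |(Q ∆ T) ∪ {a}| ≤ |Q| + |T| - 2|Q ∩ T| + 1 < n`, and since
`|E(M'_T)| ≥ 2n - 1` the set and its complement form a `k`-separation of `M'_T`.
-/

open scoped symmDiff

namespace Matroid

variable {M : Matroid α} {X S : Set α}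

lemma cast_mrank [M.RankFinite] (X : Set α) : (mrank M X : ℕ∞) = M.eRk X := by
  obtain ⟨I, hI⟩ := M.exists_isBasis' X
  rw [← hI.encard_eq_eRk, ← hI.indep.finite.cast_ncard_eq, Nat.cast_inj]
  refine IsGreatest.csSup_eq ⟨⟨I, hI.indep, hI.subset, rfl⟩, ?_⟩
  rintro _ ⟨J, hJ, hJX, rfl⟩
  have hJI : J.encard ≤ I.encard := hI.encard_eq_eRk ▸ hJ.encard_le_eRk_of_subset hJX
  rwa [← hJ.finite.cast_ncard_eq, ← hI.indep.finite.cast_ncard_eq, Nat.cast_le] at hJI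

lemma mrank_le_ncard [M.RankFinite] (hX : X.Finite) : mrank M X ≤ X.ncard := by
  have := M.eRk_le_encard X
  rwa [← cast_mrank, ← hX.cast_ncard_eq, Nat.cast_le] at this

lemma mrank_add_one_le_of_not_spanning [M.RankFinite] (hX : X ⊆ M.E) (h : ¬ M.Spanning X) :
    mrank M X + 1 ≤ mrank M M.E := by
  rw [spanning_iff_eRk_le, not_le, ← eRk_ground, ← cast_mrank, ← cast_mrank, Nat.cast_lt] at h
  exact h

lemma isKSeparation_of_not_spanning_compl [M.Finite] (hS : S ⊆ M.E)
    (hspan : ¬ M.Spanning (M.E \ S)) (hcard : S.ncard ≤ (M.E \ S).ncard) :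
    IsKSeparation M S.ncard S (M.E \ S) := by
  have hrS := mrank_le_ncard (M := M) (M.ground_finite.subset hS)
  have hrcompl := mrank_add_one_le_of_not_spanning sdiff_subset hspan
  exact ⟨union_sdiff_cancel hS, disjoint_sdiff_right, le_rfl, hcard, by omega⟩

end Matroid

lemma zmod_two_eq_one_of_ne_zero {u : ZMod 2} (hu : u ≠ 0) : u = 1 := by
  revert u
  decide

section Representation

open Submodule

variable {W : Type*} [AddCommGroup W] [Module (ZMod 2) W] {M : Matroid α} {φ : α → W}
  {X I Q : Set α} {x : α}

lemma IsRep.mem_closure_iff_of_indep_s11 (hM : IsRep M φ) (hI : M.Indep I) (hx : x ∈ M.E) :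
    x ∈ M.closure I ↔ φ x ∈ span (ZMod 2) (φ '' I) := by
  have hφI : LinearIndepOn (ZMod 2) φ I := ((hM I).1 hI).2
  rw [hI.mem_closure_iff', hφI.mem_span_iff, hM, insert_subset_iff]
  simp only [hx, hI.subset_ground, true_and]
  rfl

lemma IsRep.mem_closure_iff_s11 (hM : IsRep M φ) (hX : X ⊆ M.E) (hx : x ∈ M.E) :
    x ∈ M.closure X ↔ φ x ∈ span (ZMod 2) (φ '' X) := by
  obtain ⟨I, hI⟩ := M.exists_isBasis X
  have hspan : span (ZMod 2) (φ '' X) = span (ZMod 2) (φ '' I) := by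
    refine le_antisymm (span_le.2 ?_) (span_mono (image_mono hI.subset))
    rintro _ ⟨y, hy, rfl⟩
    exact (hM.mem_closure_iff_of_indep_s11 hI.indep (hX hy)).1 (hI.subset_closure hy)
  rw [← hI.closure_eq_closure, hspan, hM.mem_closure_iff_of_indep_s11 hI.indep hx]

lemma IsRep.not_spanning_of_forall_eq_zero (hM : IsRep M φ) (f : W →ₗ[ZMod 2] ZMod 2)
    (hf : ∀ x ∈ X, f (φ x) = 0) {x₀ : α} (hx₀ : x₀ ∈ M.E) (hfx₀ : f (φ x₀) ≠ 0) :
    ¬ M.Spanning X := by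
  intro hX
  have hmem : φ x₀ ∈ span (ZMod 2) (φ '' X) :=
    (hM.mem_closure_iff_s11 hX.subset_ground hx₀).1 (hX.closure_eq ▸ hx₀)
  have hker : span (ZMod 2) (φ '' X) ≤ LinearMap.ker f := by
    rw [span_le]
    rintro _ ⟨y, hy, rfl⟩
    exact hf y hy
  exact hfx₀ (hker hmem)

open scoped Classical in
lemma IsRep.exists_functional_of_isCocircuit (hM : IsRep M φ) (hQ : M.IsCocircuit Q) :
    ∃ g : W →ₗ[ZMod 2] ZMod 2, ∀ x ∈ M.E, g (φ x) = if x ∈ Q then 1 else 0 := by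
  rw [Matroid.isCocircuit_iff_minimal_compl_nonspanning] at hQ
  obtain ⟨x₀, hx₀E, hx₀⟩ : ∃ x₀ ∈ M.E, x₀ ∉ M.closure (M.E \ Q) := by
    have := (Matroid.not_spanning_iff_closure_ssubset sdiff_subset).1 hQ.prop
    simpa using Set.exists_of_ssubset this
  rw [hM.mem_closure_iff_s11 sdiff_subset hx₀E] at hx₀
  obtain ⟨g, hgx₀, hg⟩ := exists_dual_map_eq_bot_of_notMem hx₀ inferInstance
  have hg0 : ∀ x ∈ M.E \ Q, g (φ x) = 0 := fun x hx =>
    (mem_bot _).1 (hg ▸ mem_map_of_mem (subset_span (mem_image_of_mem φ hx)))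
  have hQsupp : Q ⊆ {x | x ∈ M.E ∧ g (φ x) ≠ 0} := by
    refine hQ.2 (fun hspan => hM.not_spanning_of_forall_eq_zero g ?_ hx₀E hgx₀ hspan) ?_
    · intro x hx
      by_contra h
      exact hx.2 ⟨hx.1, h⟩
    · intro x hx
      by_contra hxQ
      exact hx.2 (hg0 x ⟨hx.1, hxQ⟩)
  refine ⟨g, fun x hx => ?_⟩
  split_ifs with hxQ
  · exact zmod_two_eq_one_of_ne_zero (hQsupp hxQ).2
  · exact hg0 x ⟨hx, hxQ⟩

end Representation

lemma Set.ncard_symmDiff_add_two_mul_ncard_inter {s t : Set α} (hs : s.Finite) (ht : t.Finite) :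
    (s ∆ t).ncard + 2 * (s ∩ t).ncard = s.ncard + t.ncard := by
  have hst := ncard_inter_add_ncard_sdiff_eq_ncard s t hs
  have hts := ncard_inter_add_ncard_sdiff_eq_ncard t s ht
  rw [inter_comm] at hts
  rw [Set.symmDiff_def, ncard_union_eq disjoint_sdiff_sdiff hs.sdiff ht.sdiff]
  omega

section EleSplit

variable {W : Type*} [AddCommGroup W] [Module (ZMod 2) W] {M N : Matroid α} {φ : α → W}
  {T Q : Set α} {a : α}

lemma IsEleSplit.not_spanning_sdiff_insert_symmDiff (hM : IsRep M φ)
    (hN : IsEleSplit M φ T a N) (hQ : M.IsCocircuit Q) :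
    ¬ N.Spanning (N.E \ insert a (Q ∆ T)) := by
  classical
  obtain ⟨haE, hNE, hNrep⟩ := hN
  obtain ⟨g, hg⟩ := hM.exists_functional_of_isCocircuit hQ
  let f : W × ZMod 2 →ₗ[ZMod 2] ZMod 2 := g ∘ₗ LinearMap.fst _ _ _ + LinearMap.snd _ _ _
  refine hNrep.not_spanning_of_forall_eq_zero f (fun x hx => ?_)
    (hNE ▸ mem_insert a M.E) (by simp [f, splitRep])
  obtain ⟨hxN, hxS⟩ := hx
  rw [mem_insert_iff, not_or, mem_symmDiff, not_or, not_and_not_right, not_and_not_right] at hxS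
  obtain ⟨hxa, hQT, hTQ⟩ := hxS
  have hxE : x ∈ M.E := by
    rw [hNE] at hxN
    exact hxN.resolve_left hxa
  simp only [f, splitRep, if_neg hxa, LinearMap.add_apply, LinearMap.comp_apply,
    LinearMap.fst_apply, LinearMap.snd_apply, hg x hxE]
  by_cases hxT : x ∈ T
  · rw [if_pos (hTQ hxT), if_pos hxT]
    decide
  · rw [if_neg (mt hQT hxT), if_neg hxT, add_zero]

end EleSplit

theorem cocircuit_cond_of_eleSplit_nConnected_general {α W : Type*}
    [AddCommGroup W] [Module (ZMod 2) W]
    (n : ℕ) (M N : Matroid α) (φ : α → W) (hM : IsRep M φ)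
    (hfin : M.E.Finite) (hcard : 2 * n - 2 ≤ M.E.ncard)
    (T : Set α) (hT : T ⊆ M.E) (hTcard : T.ncard = n - 1)
    (a : α) (hN : IsEleSplit M φ T a N)
    (hNconn : NConnected N n) :
    ∀ Q : Set α, MCocircuit M Q → (Q ∩ T).Nonempty → 2 * (Q ∩ T).ncard ≤ Q.ncard := by
  intro Q hQ hQT
  by_contra! hlt
  have hQ : M.IsCocircuit Q := hQ
  obtain ⟨haE, hNE, -⟩ := id hN
  have : N.Finite := ⟨hNE ▸ hfin.insert a⟩
  set S := insert a (Q ∆ T)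
  have hSE : S ⊆ N.E := hNE ▸ insert_subset_insert
    (symmDiff_subset_union.trans (union_subset hQ.subset_ground hT))
  have hQfin : Q.Finite := hfin.subset hQ.subset_ground
  have hsymm := ncard_symmDiff_add_two_mul_ncard_inter hQfin (hfin.subset hT)
  have hS : S.ncard ≤ (Q ∆ T).ncard + 1 := ncard_insert_le a (Q ∆ T)
  have hS₁ : 1 ≤ S.ncard := (ncard_pos (N.ground_finite.subset hSE)).2 (insert_nonempty _ _)
  have hQT₁ : 1 ≤ (Q ∩ T).ncard := (ncard_pos (hQfin.inter_of_left T)).2 hQT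
  have hNcard : N.E.ncard = M.E.ncard + 1 := by rw [hNE, ncard_insert_of_notMem haE hfin]
  have hcompl := ncard_sdiff_add_ncard_of_subset hSE N.ground_finite
  exact hNconn _ _ _ hS₁ (by omega) (Matroid.isKSeparation_of_not_spanning_compl hSE
    (hN.not_spanning_sdiff_insert_symmDiff hM hQ) (by omega))

/-- If M'_T is n-connected, then every cocircuit Q of M meeting T satisfies
|Q| ≥ 2|Q ∩ T|. -/
theorem cocircuit_cond_of_eleSplit_nConnected {α W : Type*}
    [AddCommGroup W] [Module (ZMod 2) W]
    (n : ℕ) (hn : 2 ≤ n) (M N : Matroid α) (φ : α → W) (hM : IsRep M φ)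
    (hfin : M.E.Finite) (hcard : 2 * n - 2 ≤ M.E.ncard) (hconn : NConnected M n)
    (T : Set α) (hT : T ⊆ M.E) (hTcard : T.ncard = n - 1)
    (a : α) (hN : IsEleSplit M φ T a N)
    (hNconn : NConnected N n) :
    ∀ Q : Set α, MCocircuit M Q → (Q ∩ T).Nonempty → 2 * (Q ∩ T).ncard ≤ Q.ncard :=
  cocircuit_cond_of_eleSplit_nConnected_general n M N φ hM hfin hcard T hT hTcard a hN hNconn
end
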